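/- arXiv:1312.5085 — 2 statements merged into one kernel-verified Lean document; each statement's English description precedes it below -/
import Mathlib

section
/- With σ̄_u as above, Σ_{u ∈ (Z_4)^n} σ̄_u³ = 2^{2n+1} Σ_{j,k,h} β_{jkh}, where the triple sum is over all ordered triples of elements of S̄ and β_{jkh} = α(g_j+g_k+g_h) + α(g_j+g_k-g_h) + α(g_j-g_k+g_h) + α(g_j-g_k-g_h). -/
open Complex Finset

noncomputable def ipow (a : ZMod 4) : ℂ := Complex.I ^ a.val

def isOddZ4 (a : ZMod 4) : Prop := a = 1 ∨ a = 3

instance : DecidablePred isOddZ4 := fun a => by unfold isOddZ4; infer_instance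

/-- `g` has an odd entry and its first (lowest-index) odd entry equals 1. -/
def inOmega {n : ℕ} (g : Fin n → ZMod 4) : Prop :=
  ∃ i : Fin n, g i = 1 ∧ ∀ j : Fin n, j < i → ¬ isOddZ4 (g j)

instance {n : ℕ} : DecidablePred (inOmega (n := n)) := fun g => by
  unfold inOmega; infer_instance

def allEven {n : ℕ} (u : Fin n → ZMod 4) : Prop := ∀ i, u i = 0 ∨ u i = 2

instance {n : ℕ} : DecidablePred (allEven (n := n)) := fun u => by
  unfold allEven; infer_instance

def dot4 {n : ℕ} (u w : Fin n → ZMod 4) : ZMod 4 := ∑ i, u i * w i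

def alpha4 {n : ℕ} (g : Fin n → ZMod 4) : ℕ := if g = 0 then 1 else 0

def beta4 {n : ℕ} (a b c : Fin n → ZMod 4) : ℕ :=
  alpha4 (a + b + c) + alpha4 (a + b - c) + alpha4 (a - b + c) + alpha4 (a - b - c)

/-! Expanding the cube, a product of three factors `i^{±u·g}` is `i^{u·(±g_j ± g_k ± g_h)}`, and
the eight sign patterns pair up under `g ↦ -g` into the four terms of `β_{jkh}`. Summing over `u`,
`Σ_u i^{u·g} = 4^n α(g)` because `a ↦ i^a` is a primitive additive character of `ZMod 4`. -/

lemma Finset.sum_pow_three {ι R : Type*} [CommSemiring R] (s : Finset ι) (f : ι → R) :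
    (∑ i ∈ s, f i) ^ 3 = ∑ i ∈ s, ∑ j ∈ s, ∑ k ∈ s, f i * f j * f k := by
  rw [pow_three', sum_mul_sum, sum_mul]
  simp_rw [sum_mul_sum]

namespace AddChar

lemma map_sum_eq_prod {A M ι : Type*} [AddCommMonoid A] [CommMonoid M] (ψ : AddChar A M)
    (s : Finset ι) (f : ι → A) : ψ (∑ i ∈ s, f i) = ∏ i ∈ s, ψ (f i) := by
  induction s using Finset.cons_induction with
  | empty => simp
  | cons _ _ h ih => rw [sum_cons, prod_cons, map_add_eq_mul, ih]

theorem sum_apply_dotProduct {R R' ι : Type*} [CommRing R] [Fintype R] [DecidableEq R]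
    [CommRing R'] [IsDomain R'] [Fintype ι] [DecidableEq ι] {ψ : AddChar R R'}
    (hψ : ψ.IsPrimitive) (g : ι → R) :
    ∑ u : ι → R, ψ (u ⬝ᵥ g) = if g = 0 then (Fintype.card R : R') ^ Fintype.card ι else 0 := by
  simp_rw [dotProduct, map_sum_eq_prod]
  rw [← Fintype.prod_sum (fun i a => ψ (a * g i))]
  simp_rw [sum_mulShift _ hψ]
  split_ifs with hg
  · simp [hg]
  · obtain ⟨i, hi⟩ : ∃ i, g i ≠ 0 := Function.ne_iff.mp hg
    exact prod_eq_zero (mem_univ i) (by rw [if_neg hi, Nat.cast_zero])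

lemma add_neg_mul_add_neg_mul_add_neg {A M : Type*} [AddCommGroup A] [CommSemiring M]
    (ψ : AddChar A M) (x y z : A) :
    (ψ x + ψ (-x)) * (ψ y + ψ (-y)) * (ψ z + ψ (-z)) =
      (ψ (x + y + z) + ψ (-(x + y + z))) + (ψ (x + y - z) + ψ (-(x + y - z))) +
        (ψ (x - y + z) + ψ (-(x - y + z))) + (ψ (x - y - z) + ψ (-(x - y - z))) := by
  simp only [sub_eq_add_neg, neg_add, neg_neg, map_add_eq_mul]
  ring

end AddChar

lemma ipow_eq_zmodChar : ipow = AddChar.zmodChar 4 Complex.I_pow_four := rfl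

lemma isPrimitive_zmodChar_I : (AddChar.zmodChar 4 Complex.I_pow_four).IsPrimitive :=
  AddChar.zmodChar_primitive_of_primitive_root 4 Complex.isPrimitiveRoot_I

lemma dot4_eq_dotProduct {n : ℕ} (u g : Fin n → ZMod 4) : dot4 u g = u ⬝ᵥ g := rfl

lemma sum_ipow_dot4 {n : ℕ} (g : Fin n → ZMod 4) :
    ∑ u : Fin n → ZMod 4, ipow (dot4 u g) = 2 ^ (2 * n) * alpha4 g := by
  simp_rw [dot4_eq_dotProduct, ipow_eq_zmodChar,
    AddChar.sum_apply_dotProduct isPrimitive_zmodChar_I g, alpha4]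
  split_ifs <;> norm_num [pow_mul]

lemma alpha4_neg {n : ℕ} (g : Fin n → ZMod 4) : alpha4 (-g) = alpha4 g := by
  simp only [alpha4, neg_eq_zero]

lemma ipow_neg_dot4 {n : ℕ} (u g : Fin n → ZMod 4) : ipow (-dot4 u g) = ipow (dot4 u (-g)) := by
  rw [dot4_eq_dotProduct, dot4_eq_dotProduct, dotProduct_neg]

lemma sum_ipow_triple {n : ℕ} (a b c : Fin n → ZMod 4) :
    ∑ u : Fin n → ZMod 4,
      (ipow (dot4 u a) + ipow (-dot4 u a)) * (ipow (dot4 u b) + ipow (-dot4 u b)) *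
        (ipow (dot4 u c) + ipow (-dot4 u c))
      = 2 ^ (2 * n + 1) * beta4 a b c := by
  have expand : ∀ u : Fin n → ZMod 4,
      (ipow (dot4 u a) + ipow (-dot4 u a)) * (ipow (dot4 u b) + ipow (-dot4 u b)) *
        (ipow (dot4 u c) + ipow (-dot4 u c)) =
      (ipow (dot4 u (a + b + c)) + ipow (-dot4 u (a + b + c))) +
        (ipow (dot4 u (a + b - c)) + ipow (-dot4 u (a + b - c))) +
        (ipow (dot4 u (a - b + c)) + ipow (-dot4 u (a - b + c))) +
        (ipow (dot4 u (a - b - c)) + ipow (-dot4 u (a - b - c))) := fun u => by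
    simp only [dot4_eq_dotProduct, dotProduct_add, dotProduct_sub]
    exact (AddChar.zmodChar 4 Complex.I_pow_four).add_neg_mul_add_neg_mul_add_neg _ _ _
  simp_rw [expand, ipow_neg_dot4, sum_add_distrib, sum_ipow_dot4, alpha4_neg, beta4]
  push_cast
  ring

theorem cube_sum_formula_general {n : ℕ} (Sb : Finset (Fin n → ZMod 4)) :
    ∑ u : Fin n → ZMod 4,
        (∑ g ∈ Sb, (ipow (dot4 u g) + ipow (-(dot4 u g)))) ^ 3
      = 2 ^ (2 * n + 1) *
        ∑ gj ∈ Sb, ∑ gk ∈ Sb, ∑ gh ∈ Sb, (beta4 gj gk gh : ℂ) := by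
  calc _ = ∑ gj ∈ Sb, ∑ gk ∈ Sb, ∑ gh ∈ Sb, ∑ u : Fin n → ZMod 4,
        (ipow (dot4 u gj) + ipow (-dot4 u gj)) * (ipow (dot4 u gk) + ipow (-dot4 u gk)) *
          (ipow (dot4 u gh) + ipow (-dot4 u gh)) := by
        simp_rw [sum_pow_three]
        rw [sum_comm]
        refine sum_congr rfl fun _ _ => ?_
        rw [sum_comm]
        exact sum_congr rfl fun _ _ => sum_comm
    _ = _ := by simp_rw [sum_ipow_triple, mul_sum]

/-- Equation (A.5): Σ_u σ̄_u³ = 2^{2n+1} Σ_{j,k,h} β_{jkh}. -/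
theorem cube_sum_formula {n : ℕ} (Sb : Finset (Fin n → ZMod 4))
    (hΩ : ∀ g ∈ Sb, inOmega g) :
    ∑ u : Fin n → ZMod 4,
        (∑ g ∈ Sb, (ipow (dot4 u g) + ipow (-(dot4 u g)))) ^ 3
      = 2 ^ (2 * n + 1) *
        ∑ gj ∈ Sb, ∑ gk ∈ Sb, ∑ gh ∈ Sb, (beta4 gj gk gh : ℂ) :=
  cube_sum_formula_general Sb
end

section
/- Let S̄ be an even subset of Ω of size v − s ≥ 1 containing a distinguished element g* (the 'partial' generator). Define σ̄_{odd,u} = (i^{u·g*} + i^{3 − u·g*})/(1 − i) + Σ_{g ∈ S̄, g ≠ g*} (i^{u·g} + i^{−u·g}) and F_{odd,3} = 3·2^n Σ_{u ∈ Δ_0} σ̄_{odd,u}² + Σ_{u ∈ (Z_4)^n} σ̄_{odd,u}³. Then Σ_{u ∈ Δ_0} σ̄_{odd,u}² = 2^n (2(v−s) − 1)², Σ_{u ∈ (Z_4)^n} σ̄_{odd,u}³ = 0, and hence F_{odd,3} = 3·2^{2n}(2(v−s) − 1)². -/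
open Complex Finset

/-- The paper's σ̄_{odd,u} (A.14), with `gstar` the distinguished (partial) generator g*. -/
noncomputable def sigOdd {n : ℕ} (Sb : Finset (Fin n → ZMod 4))
    (gstar : Fin n → ZMod 4) (u : Fin n → ZMod 4) : ℂ :=
  (ipow (dot4 u gstar) + ipow (3 - dot4 u gstar)) / (1 - Complex.I)
    + ∑ g ∈ Sb.erase gstar, (ipow (dot4 u g) + ipow (-(dot4 u g)))

/-!
For `u ∈ Δ₀`, evenness of `S̄` forces `u·g = u·g* ∈ {0, 2}` for every `g ∈ S̄`, so that
`σ̄_{odd,u} = ±(2(v−s) − 1)`. For the cubic sum, let `i` be the first odd position of `g*`;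
evenness makes `g i` odd for every `g ∈ S̄`, so translating `u` by `2 eᵢ` adds `2` to every
exponent `u·g` and negates `σ̄_{odd,u}`. Thus `σ̄³` is antiperiodic and sums to zero.
-/

open Function

theorem Function.Antiperiodic.sum_eq_zero {G R : Type*} [AddGroup G] [Fintype G]
    [NonAssocRing R] [NoZeroDivisors R] [CharZero R] {f : G → R} {c : G}
    (hf : Antiperiodic f c) : ∑ x, f x = 0 := by
  have h := Equiv.sum_comp (Equiv.addRight c) f
  simp only [Equiv.coe_addRight, hf _, sum_neg_distrib] at h
  exact CharZero.neg_eq_self_iff.mp h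

lemma ipow_add (a b : ZMod 4) : ipow (a + b) = ipow a * ipow b := by
  rw [ipow, ipow, ipow, ZMod.val_add, ← Complex.I_pow_eq_pow_mod, pow_add]

@[simp] lemma ipow_zero : ipow 0 = 1 := pow_zero _

@[simp] lemma ipow_two : ipow 2 = -1 := Complex.I_sq

@[simp] lemma ipow_three : ipow 3 = -Complex.I := Complex.I_pow_three

lemma ipow_add_two (a : ZMod 4) : ipow (a + 2) = -ipow a := by
  simp [ipow_add]

lemma ipow_sub_two (a : ZMod 4) : ipow (a - 2) = -ipow a := by
  rw [sub_eq_add_neg, show (-2 : ZMod 4) = 2 from rfl, ipow_add_two]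

lemma ipow_sq_of_neg_eq {a : ZMod 4} (ha : -a = a) : ipow a ^ 2 = 1 := by
  rw [sq, ← ipow_add]
  nth_rewrite 1 [← ha]
  rw [neg_add_cancel, ipow_zero]

lemma ZMod4.neg_mul_of_even : ∀ a b : ZMod 4, a = 0 ∨ a = 2 → -(a * b) = a * b := by
  decide

lemma ZMod4.mul_eq_mul_of_even :
    ∀ a b c : ZMod 4, a = 0 ∨ a = 2 → b + c = 0 ∨ b + c = 2 → a * b = a * c := by
  decide

lemma ZMod4.isOddZ4_of_even_add_one : ∀ a : ZMod 4, a + 1 = 0 ∨ a + 1 = 2 → isOddZ4 a := by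
  decide

lemma ZMod4.two_mul_of_isOddZ4 : ∀ a : ZMod 4, isOddZ4 a → 2 * a = 2 := by
  decide

section dot4

variable {n : ℕ} {u w w' : Fin n → ZMod 4}

lemma dot4_add_left (u v w : Fin n → ZMod 4) : dot4 (u + v) w = dot4 u w + dot4 v w := by
  simp only [dot4, Pi.add_apply, add_mul, sum_add_distrib]

lemma dot4_single_left (i : Fin n) (c : ZMod 4) (w : Fin n → ZMod 4) :
    dot4 (Pi.single i c) w = c * w i := by
  simp [dot4, Pi.single_apply]

lemma neg_dot4_of_allEven (hu : allEven u) : -dot4 u w = dot4 u w := by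
  rw [dot4, ← sum_neg_distrib]
  exact sum_congr rfl fun i _ => ZMod4.neg_mul_of_even _ _ (hu i)

lemma dot4_eq_of_allEven (hu : allEven u) (hw : allEven (w + w')) : dot4 u w = dot4 u w' :=
  sum_congr rfl fun i _ => ZMod4.mul_eq_mul_of_even _ _ _ (hu i) (hw i)

lemma dot4_add_single_two {i : Fin n} (hw : isOddZ4 (w i)) :
    dot4 (u + Pi.single i 2) w = dot4 u w + 2 := by
  rw [dot4_add_left, dot4_single_left, ZMod4.two_mul_of_isOddZ4 _ hw]

lemma card_filter_allEven : #(univ.filter (allEven (n := n))) = 2 ^ n := by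
  have h : univ.filter (allEven (n := n))
      = Fintype.piFinset fun _ => ({0, 2} : Finset (ZMod 4)) := by
    ext u
    simp [allEven, Fintype.mem_piFinset]
  rw [h, Fintype.card_piFinset_const]
  rfl

end dot4

section sigOdd

variable {n : ℕ} {Sb : Finset (Fin n → ZMod 4)} {gstar : Fin n → ZMod 4}

lemma sigOdd_of_allEven (heven : ∀ g ∈ Sb, ∀ g' ∈ Sb, allEven (g + g')) (hg : gstar ∈ Sb)
    {u : Fin n → ZMod 4} (hu : allEven u) :
    sigOdd Sb gstar u = ipow (dot4 u gstar) * (2 * #Sb - 1) := by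
  set d := dot4 u gstar
  have hd : -d = d := neg_dot4_of_allEven hu
  have hpair : ∀ g ∈ Sb.erase gstar, ipow (dot4 u g) + ipow (-dot4 u g) = 2 * ipow d := by
    intro g hgS
    rw [dot4_eq_of_allEven hu (heven g (mem_of_mem_erase hgS) gstar hg), hd]
    ring
  have hstar : ipow (3 - d) = -Complex.I * ipow d := by
    rw [sub_eq_add_neg, hd, ipow_add, ipow_three]
  have hI : (1 : ℂ) - Complex.I ≠ 0 := fun h => by simpa using congrArg Complex.im h
  rw [sigOdd, sum_congr rfl hpair, sum_const, card_erase_of_mem hg, nsmul_eq_mul,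
    Nat.cast_sub (card_pos.mpr ⟨_, hg⟩), hstar]
  field_simp
  ring

lemma sum_sq_sigOdd_allEven (heven : ∀ g ∈ Sb, ∀ g' ∈ Sb, allEven (g + g')) (hg : gstar ∈ Sb) :
    ∑ u ∈ univ.filter (allEven (n := n)), sigOdd Sb gstar u ^ 2 = 2 ^ n * (2 * #Sb - 1) ^ 2 := by
  have hsq : ∀ u ∈ univ.filter (allEven (n := n)),
      sigOdd Sb gstar u ^ 2 = (2 * #Sb - 1) ^ 2 := by
    intro u hu
    have hu := (mem_filter.mp hu).2
    rw [sigOdd_of_allEven heven hg hu, mul_pow, ipow_sq_of_neg_eq (neg_dot4_of_allEven hu),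
      one_mul]
  rw [sum_congr rfl hsq, sum_const, card_filter_allEven, nsmul_eq_mul, Nat.cast_pow,
    Nat.cast_ofNat]

lemma sigOdd_antiperiodic {i : Fin n} (hodd : ∀ g ∈ Sb, isOddZ4 (g i)) (hg : gstar ∈ Sb) :
    Antiperiodic (sigOdd Sb gstar) (Pi.single i 2) := by
  intro u
  have hshift : ∀ g ∈ Sb, dot4 (u + Pi.single i 2) g = dot4 u g + 2 :=
    fun g hgS => dot4_add_single_two (hodd g hgS)
  have hpair : ∀ g ∈ Sb.erase gstar,
      ipow (dot4 (u + Pi.single i 2) g) + ipow (-dot4 (u + Pi.single i 2) g)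
        = -(ipow (dot4 u g) + ipow (-dot4 u g)) := by
    intro g hgS
    rw [hshift g (mem_of_mem_erase hgS), neg_add', ipow_add_two, ipow_sub_two, neg_add]
  rw [sigOdd, sigOdd, sum_congr rfl hpair, sum_neg_distrib, hshift gstar hg, ← sub_sub,
    ipow_add_two, ipow_sub_two]
  ring

end sigOdd

theorem even_set_sums_odd_general {n : ℕ} (Sb : Finset (Fin n → ZMod 4))
    (hΩ : ∀ g ∈ Sb, inOmega g)
    (heven : ∀ g ∈ Sb, ∀ g' ∈ Sb, allEven (g + g'))
    (gstar : Fin n → ZMod 4) (hg : gstar ∈ Sb) :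
    (∑ u ∈ Finset.univ.filter (allEven (n := n)), (sigOdd Sb gstar u) ^ 2
        = 2 ^ n * (2 * (Sb.card : ℂ) - 1) ^ 2) ∧
    (∑ u : Fin n → ZMod 4, (sigOdd Sb gstar u) ^ 3 = 0) ∧
    (3 * 2 ^ n *
        (∑ u ∈ Finset.univ.filter (allEven (n := n)), (sigOdd Sb gstar u) ^ 2) +
      (∑ u : Fin n → ZMod 4, (sigOdd Sb gstar u) ^ 3)
        = 3 * 2 ^ (2 * n) * (2 * (Sb.card : ℂ) - 1) ^ 2) := by
  obtain ⟨i, hi, -⟩ := hΩ gstar hg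
  have hodd : ∀ g ∈ Sb, isOddZ4 (g i) := fun g hgS =>
    ZMod4.isOddZ4_of_even_add_one _ (by simpa [hi] using heven g hgS gstar hg i)
  have hanti := sigOdd_antiperiodic hodd hg
  have hsq := sum_sq_sigOdd_allEven heven hg
  have hcube : ∑ u, sigOdd Sb gstar u ^ 3 = 0 :=
    Antiperiodic.sum_eq_zero fun u => by rw [hanti u, Odd.neg_pow (by decide)]
  refine ⟨hsq, hcube, ?_⟩
  rw [hsq, hcube]
  ring

/-- For an even S̄ ⊆ Ω with distinguished element g*:
Σ_{u ∈ Δ₀} σ̄_{odd,u}² = 2^n(2(v-s)-1)², Σ_u σ̄_{odd,u}³ = 0, and hence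
F_{odd,3} = 3·2^{2n}(2(v-s)-1)². -/
theorem even_set_sums_odd {n : ℕ} (Sb : Finset (Fin n → ZMod 4))
    (hΩ : ∀ g ∈ Sb, inOmega g)
    (heven : ∀ g ∈ Sb, ∀ g' ∈ Sb, allEven (g + g'))
    (gstar : Fin n → ZMod 4) (hg : gstar ∈ Sb) (hcard : 1 ≤ Sb.card) :
    (∑ u ∈ Finset.univ.filter (allEven (n := n)), (sigOdd Sb gstar u) ^ 2
        = 2 ^ n * (2 * (Sb.card : ℂ) - 1) ^ 2) ∧
    (∑ u : Fin n → ZMod 4, (sigOdd Sb gstar u) ^ 3 = 0) ∧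
    (3 * 2 ^ n *
        (∑ u ∈ Finset.univ.filter (allEven (n := n)), (sigOdd Sb gstar u) ^ 2) +
      (∑ u : Fin n → ZMod 4, (sigOdd Sb gstar u) ^ 3)
        = 3 * 2 ^ (2 * n) * (2 * (Sb.card : ℂ) - 1) ^ 2) :=
  even_set_sums_odd_general Sb hΩ heven gstar hg
end
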